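/- With the internal tensor ⊗' and internal associator τ := ◁∘(◁⊗1_S)∘α_{S,S,S}∘(1_S⊗▷)∘▷ induced by a self-similar structure (S,◁,▷), τ satisfies MacLane's pentagon condition: (τ ⊗' 1_S) ∘ τ ∘ (1_S ⊗' τ) = τ ∘ τ. -/

import Mathlib

/-!
Since `c ≫ d = 𝟙`, conjugation `f ↦ d ≫ f ≫ c` from endomorphisms of `S ⊗ S` to endomorphisms
of `S` is multiplicative, and `τ` is the conjugate of `S ◁ d ≫ α⁻¹ ≫ c ▷ S`. Both sides of the
pentagon are therefore conjugates, and the identity between the conjugated morphisms follows by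
cancelling the whiskered copies of `c ≫ d`, naturality of `α`, and Mac Lane's pentagon for `α`.
-/

open CategoryTheory MonoidalCategory

section

variable {C : Type*} [Category C] [MonoidalCategory C] {S : C}
  {c : S ⊗ S ⟶ S} {d : S ⟶ S ⊗ S}

variable (c d) in
def associatorThrough : S ⊗ S ⟶ S ⊗ S :=
  S ◁ d ≫ (α_ S S S).inv ≫ c ▷ S

theorem comp_conj_comp_conj (hcd : c ≫ d = 𝟙 (S ⊗ S)) (f g : S ⊗ S ⟶ S ⊗ S) :
    (d ≫ f ≫ c) ≫ d ≫ g ≫ c = d ≫ (f ≫ g) ≫ c := by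
  simp [reassoc_of% hcd]

theorem associatorThrough_pentagon (hcd : c ≫ d = 𝟙 (S ⊗ S)) :
    S ◁ (d ≫ associatorThrough c d ≫ c) ≫ associatorThrough c d ≫
      (d ≫ associatorThrough c d ≫ c) ▷ S =
    associatorThrough c d ≫ associatorThrough c d := by
  have hL : S ◁ c ≫ S ◁ d = 𝟙 _ := by rw [← whiskerLeft_comp, hcd, whiskerLeft_id]
  have hR : c ▷ S ≫ d ▷ S = 𝟙 _ := by rw [← comp_whiskerRight, hcd, id_whiskerRight]
  have hLR : (S ◁ c) ▷ S ≫ (S ◁ d) ▷ S = 𝟙 _ := by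
    rw [← comp_whiskerRight, hL, id_whiskerRight]
  unfold associatorThrough
  calc _ = S ◁ d ≫ S ◁ S ◁ d ≫ S ◁ (α_ S S S).inv ≫ S ◁ c ▷ S ≫ (S ◁ c ≫ S ◁ d) ≫
          (α_ S S S).inv ≫ (c ▷ S ≫ d ▷ S) ≫ (S ◁ d) ▷ S ≫ (α_ S S S).inv ▷ S ≫
          (c ▷ S) ▷ S ≫ c ▷ S := by monoidal
    _ = S ◁ d ≫ S ◁ S ◁ d ≫ S ◁ (α_ S S S).inv ≫ (α_ S (S ⊗ S) S).inv ≫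
          ((S ◁ c) ▷ S ≫ (S ◁ d) ▷ S) ≫ (α_ S S S).inv ▷ S ≫ (c ▷ S) ▷ S ≫ c ▷ S := by
      rw [hL, hR]; monoidal
    _ = S ◁ d ≫ (α_ S S S).inv ≫ ((S ⊗ S) ◁ d ≫ c ▷ (S ⊗ S)) ≫ (α_ S S S).inv ≫ c ▷ S := by
      rw [hLR]; monoidal
    _ = _ := by rw [whisker_exchange]; monoidal

end

theorem stmt13_general {C : Type*} [Category C] [MonoidalCategory C] {S : C}
    (c : S ⊗ S ⟶ S) (d : S ⟶ S ⊗ S)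
    (hcd : c ≫ d = 𝟙 (S ⊗ S))
    (tp : (S ⟶ S) → (S ⟶ S) → (S ⟶ S))
    (htp : ∀ f g : S ⟶ S, tp f g = d ≫ (f ⊗ₘ g) ≫ c)
    (τ : S ⟶ S)
    (hτ : τ = d ≫ (𝟙 S ⊗ₘ d) ≫ (α_ S S S).inv ≫ (c ⊗ₘ 𝟙 S) ≫ c) :
    tp (𝟙 S) τ ≫ τ ≫ tp τ (𝟙 S) = τ ≫ τ := by
  have hτ' : τ = d ≫ associatorThrough c d ≫ c := by
    rw [hτ, id_tensorHom, tensorHom_id, associatorThrough, Category.assoc, Category.assoc]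
  rw [htp, htp, id_tensorHom, tensorHom_id, hτ', comp_conj_comp_conj hcd,
    comp_conj_comp_conj hcd, comp_conj_comp_conj hcd, associatorThrough_pentagon hcd]

/-- The internal associator τ satisfies MacLane's pentagon condition:
(τ ⊗' 1_S) ∘ τ ∘ (1_S ⊗' τ) = τ ∘ τ. -/
theorem stmt13 {C : Type*} [Category C] [MonoidalCategory C] {S : C}
    (c : S ⊗ S ⟶ S) (d : S ⟶ S ⊗ S)
    (hdc : d ≫ c = 𝟙 S) (hcd : c ≫ d = 𝟙 (S ⊗ S))
    (tp : (S ⟶ S) → (S ⟶ S) → (S ⟶ S))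
    (htp : ∀ f g : S ⟶ S, tp f g = d ≫ (f ⊗ₘ g) ≫ c)
    (τ : S ⟶ S)
    (hτ : τ = d ≫ (𝟙 S ⊗ₘ d) ≫ (α_ S S S).inv ≫ (c ⊗ₘ 𝟙 S) ≫ c) :
    tp (𝟙 S) τ ≫ τ ≫ tp τ (𝟙 S) = τ ≫ τ :=
  stmt13_general c d hcd tp htp τ hτ
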